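/- The ideal tilted CHSH strategy achieves the quantum bound: for β ∈ [0,2), let θ ∈ (0, π/4] with sin 2θ = √((4−β²)/(4+β²)), μ = arctan(sin 2θ), α = tan θ, |Ψ⟩ = cos θ(|00⟩ + α|11⟩), A₀ = σ^z, A₁ = σ^x, B₀ = cos μ σ^z + sin μ σ^x, B₁ = cos μ σ^z − sin μ σ^x. Then ⟨Ψ| βA₀⊗I + A₀⊗B₀ + A₀⊗B₁ + A₁⊗B₀ − A₁⊗B₁ |Ψ⟩ = √(8 + 2β²). -/

import Mathlib

open Kronecker Matrix

noncomputable section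

/-- The Pauli `σᶻ` matrix. -/
def sigmaZ : Matrix (Fin 2) (Fin 2) ℂ := !![1, 0; 0, -1]

/-- The Pauli `σˣ` matrix. -/
def sigmaX : Matrix (Fin 2) (Fin 2) ℂ := !![0, 1; 1, 0]

/-- The tilted Pauli observable `σᶻ_α = cos μ σᶻ + sin μ σˣ`. -/
def tiltedZ (μ : ℝ) : Matrix (Fin 2) (Fin 2) ℂ :=
  (Real.cos μ : ℂ) • sigmaZ + (Real.sin μ : ℂ) • sigmaX

/-- The tilted Pauli observable `σˣ_α = cos μ σᶻ − sin μ σˣ`. -/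
def tiltedX (μ : ℝ) : Matrix (Fin 2) (Fin 2) ℂ :=
  (Real.cos μ : ℂ) • sigmaZ - (Real.sin μ : ℂ) • sigmaX

/-- The tilted EPR pair `cos θ (|00⟩ + α |11⟩)`. -/
def tiltedEPR (θ α : ℝ) : Fin 2 × Fin 2 → ℂ := fun p =>
  if p = (0, 0) then (Real.cos θ : ℂ)
  else if p = (1, 1) then (Real.cos θ : ℂ) * (α : ℂ) else 0

/-! Since `B₀ + B₁ = 2 cos μ σᶻ` and `B₀ - B₁ = 2 sin μ σˣ`, the tilted CHSH operator is
`β σᶻ⊗1 + 2 cos μ σᶻ⊗σᶻ + 2 sin μ σˣ⊗σˣ`, whose expectations in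
`|Ψ⟩ = cos θ |00⟩ + sin θ |11⟩` are `cos 2θ`, `1` and `sin 2θ`. Writing `s = sin 2θ`, the choice
`μ = arctan s` gives `2 cos μ + 2 s sin μ = 2 √(1 + s²)`, and the constraint on `s` turns
`β √(1 - s²) + 2 √(1 + s²)` into `√(8 + 2β²)`. -/

theorem Matrix.kronecker_sub {l m n p α : Type*} [NonUnitalNonAssocRing α]
    (A : Matrix l m α) (B₁ B₂ : Matrix n p α) : A ⊗ₖ (B₁ - B₂) = A ⊗ₖ B₁ - A ⊗ₖ B₂ := by
  ext ⟨i₁, i₂⟩ ⟨j₁, j₂⟩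
  simp [mul_sub]

theorem tiltedZ_add_tiltedX (μ : ℝ) :
    tiltedZ μ + tiltedX μ = ((2 * Real.cos μ : ℝ) : ℂ) • sigmaZ := by
  rw [tiltedZ, tiltedX]; push_cast; module

theorem tiltedZ_sub_tiltedX (μ : ℝ) :
    tiltedZ μ - tiltedX μ = ((2 * Real.sin μ : ℝ) : ℂ) • sigmaX := by
  rw [tiltedZ, tiltedX]; push_cast; module

theorem tiltedCHSH_operator_eq (β μ : ℝ) :
    (β : ℂ) • (sigmaZ ⊗ₖ (1 : Matrix (Fin 2) (Fin 2) ℂ))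
          + sigmaZ ⊗ₖ tiltedZ μ + sigmaZ ⊗ₖ tiltedX μ
          + sigmaX ⊗ₖ tiltedZ μ - sigmaX ⊗ₖ tiltedX μ
      = (β : ℂ) • (sigmaZ ⊗ₖ 1) + ((2 * Real.cos μ : ℝ) : ℂ) • (sigmaZ ⊗ₖ sigmaZ)
          + ((2 * Real.sin μ : ℝ) : ℂ) • (sigmaX ⊗ₖ sigmaX) := by
  calc _ = (β : ℂ) • (sigmaZ ⊗ₖ 1) + sigmaZ ⊗ₖ (tiltedZ μ + tiltedX μ)
          + sigmaX ⊗ₖ (tiltedZ μ - tiltedX μ) := by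
        rw [kronecker_add, kronecker_sub]; abel
    _ = _ := by rw [tiltedZ_add_tiltedX, tiltedZ_sub_tiltedX, kronecker_smul, kronecker_smul]

theorem tiltedEPR_expectation (θ α a b c : ℝ) :
    star (tiltedEPR θ α) ⬝ᵥ (((a : ℂ) • (sigmaZ ⊗ₖ (1 : Matrix (Fin 2) (Fin 2) ℂ))
        + (b : ℂ) • (sigmaZ ⊗ₖ sigmaZ) + (c : ℂ) • (sigmaX ⊗ₖ sigmaX)) *ᵥ tiltedEPR θ α)
      = ((Real.cos θ ^ 2 * (a * (1 - α ^ 2) + b * (1 + α ^ 2) + c * (2 * α)) : ℝ) : ℂ) := by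
  simp only [tiltedEPR, sigmaZ, sigmaX, dotProduct, mulVec, Fintype.sum_prod_type,
    Fin.sum_univ_two, kroneckerMap_apply, Matrix.add_apply, Matrix.smul_apply, Matrix.one_apply,
    Pi.star_apply, Complex.star_def, smul_eq_mul]
  norm_num [Prod.ext_iff]
  simp only [← Complex.ofReal_cos, Complex.conj_ofReal]
  push_cast
  ring

theorem cos_sq_mul_tan_expansion {θ : ℝ} (h : Real.cos θ ≠ 0) (a b c : ℝ) :
    Real.cos θ ^ 2 * (a * (1 - Real.tan θ ^ 2) + b * (1 + Real.tan θ ^ 2) + c * (2 * Real.tan θ))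
      = a * Real.cos (2 * θ) + b + c * Real.sin (2 * θ) := by
  rw [Real.tan_eq_sin_div_cos, Real.cos_two_mul', Real.sin_two_mul]
  field_simp
  linear_combination b * Real.sin_sq_add_cos_sq θ

theorem cos_arctan_add_mul_sin_arctan (s : ℝ) :
    Real.cos (Real.arctan s) + s * Real.sin (Real.arctan s) = √(1 + s ^ 2) := by
  have h : 0 < √(1 + s ^ 2) := Real.sqrt_pos.2 (by positivity)
  rw [Real.cos_arctan, Real.sin_arctan]
  field_simp
  rw [Real.sq_sqrt (by positivity)]

theorem mul_sqrt_one_sub_sq_add_two_mul_sqrt_one_add_sq {β s : ℝ} (hβ : 0 ≤ β)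
    (hs : s ^ 2 = (4 - β ^ 2) / (4 + β ^ 2)) :
    β * √(1 - s ^ 2) + 2 * √(1 + s ^ 2) = √(8 + 2 * β ^ 2) := by
  have hD : 0 < 4 + β ^ 2 := by positivity
  have h1 : √(1 - s ^ 2) = β * √(2 / (4 + β ^ 2)) := by
    rw [hs, show 1 - (4 - β ^ 2) / (4 + β ^ 2) = β ^ 2 * (2 / (4 + β ^ 2)) by field_simp; ring,
      Real.sqrt_mul (sq_nonneg β), Real.sqrt_sq hβ]
  have h2 : √(1 + s ^ 2) = 2 * √(2 / (4 + β ^ 2)) := by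
    rw [hs, show 1 + (4 - β ^ 2) / (4 + β ^ 2) = 2 ^ 2 * (2 / (4 + β ^ 2)) by field_simp; ring,
      Real.sqrt_mul (by norm_num), Real.sqrt_sq (by norm_num)]
  rw [h1, h2, show 8 + 2 * β ^ 2 = (4 + β ^ 2) ^ 2 * (2 / (4 + β ^ 2)) by field_simp; ring,
    Real.sqrt_mul (by positivity), Real.sqrt_sq hD.le]
  ring

/-- The ideal tilted CHSH strategy achieves the quantum bound
`√(8 + 2β²)`: with `sin 2θ = √((4−β²)/(4+β²))`, `μ = arctan (sin 2θ)`, `α = tan θ`,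
the state `|Ψ⟩ = cos θ (|00⟩ + α|11⟩)` and observables `A₀ = σᶻ`, `A₁ = σˣ`,
`B₀ = cos μ σᶻ + sin μ σˣ`, `B₁ = cos μ σᶻ − sin μ σˣ` achieve equality in the
tilted CHSH inequality. -/
theorem tilted_chsh_ideal_strategy (β θ μ α : ℝ)
    (hβ0 : 0 ≤ β) (hβ2 : β < 2) (hθ0 : 0 < θ) (hθ1 : θ ≤ Real.pi / 4)
    (hsin : Real.sin (2 * θ) = Real.sqrt ((4 - β ^ 2) / (4 + β ^ 2)))
    (hμ : μ = Real.arctan (Real.sin (2 * θ)))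
    (hα : α = Real.tan θ) :
    (star (tiltedEPR θ α) ⬝ᵥ
      (((β : ℂ) • (sigmaZ ⊗ₖ (1 : Matrix (Fin 2) (Fin 2) ℂ))
          + sigmaZ ⊗ₖ tiltedZ μ + sigmaZ ⊗ₖ tiltedX μ
          + sigmaX ⊗ₖ tiltedZ μ - sigmaX ⊗ₖ tiltedX μ) *ᵥ tiltedEPR θ α)).re
      = Real.sqrt (8 + 2 * β ^ 2) := by
  have hcos : Real.cos θ ≠ 0 :=
    (Real.cos_pos_of_mem_Ioo ⟨by linarith [Real.pi_pos], by linarith [Real.pi_pos]⟩).ne'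
  have hcos2 : Real.cos (2 * θ) = √(1 - Real.sin (2 * θ) ^ 2) :=
    Real.cos_eq_sqrt_one_sub_sin_sq (by linarith [Real.pi_pos]) (by linarith)
  have hsin_sq : Real.sin (2 * θ) ^ 2 = (4 - β ^ 2) / (4 + β ^ 2) := by
    rw [hsin]
    exact Real.sq_sqrt (div_nonneg (by nlinarith) (by positivity))
  rw [tiltedCHSH_operator_eq, tiltedEPR_expectation, Complex.ofReal_re, hα,
    cos_sq_mul_tan_expansion hcos, hμ, ← mul_sqrt_one_sub_sq_add_two_mul_sqrt_one_add_sq hβ0 hsin_sq,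
    ← cos_arctan_add_mul_sin_arctan, ← hcos2]
  ring

end
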